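/- arXiv:2506.07578 — 5 statements merged into one kernel-verified Lean document; each statement's English description precedes it below -/
import Mathlib

section
/- Let X be a finite nonempty set and T a row-stochastic transition matrix on X (T(j | i) ≥ 0 and ∑_j T(j | i) = 1 for each i) with minimal mixing rate γ := min_{i₁,i₂} ∑_j min{T(j | i₁), T(j | i₂)}. Then for any two probability distributions φ and ψ on X, δ(T·φ, T·ψ) ≤ (1 − γ)·δ(φ, ψ), where (T·φ)(j) = ∑_i T(j | i)·φ(i). -/
/-!
Write `φ - ψ = p - q` with `p`, `q` its positive and negative parts; both have mass
`D = δ(φ, ψ)`. Coupling them, `D • T(p - q) = ∑_{i,k} p_i q_k (T_i - T_k)` is a nonnegative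
combination of differences of rows, and the `ℓ¹`-norm of each such difference is
`2 - 2 ∑_j min (T i j) (T k j) ≤ 2 (1 - γ)`. The triangle inequality gives
`D · ‖T(φ - ψ)‖₁ ≤ 2 (1 - γ) D²`.
-/

open Finset

theorem abs_sub_eq_add_sub_two_mul_min (a b : ℝ) : |a - b| = a + b - 2 * min a b := by
  rw [← max_sub_min_eq_abs', ← min_add_max]
  ring

theorem sum_abs_sub_eq_sub_two_mul_sum_min {κ : Type*} (s : Finset κ) (u v : κ → ℝ) :
    ∑ j ∈ s, |u j - v j| = ∑ j ∈ s, u j + ∑ j ∈ s, v j - 2 * ∑ j ∈ s, min (u j) (v j) := by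
  simp only [abs_sub_eq_add_sub_two_mul_min, sum_sub_distrib, sum_add_distrib, mul_sum]

section MixingRate

variable {ι κ : Type*} [Fintype κ] (T : ι → κ → ℝ) {γ : ℝ}

theorem sum_abs_sub_rows_le (hT1 : ∀ i, ∑ j, T i j = 1)
    (hγ : ∀ i k, γ ≤ ∑ j, min (T i j) (T k j)) (i k : ι) :
    ∑ j, |T i j - T k j| ≤ 2 * (1 - γ) := by
  rw [sum_abs_sub_eq_sub_two_mul_sum_min, hT1, hT1]
  linarith [hγ i k]

theorem sum_mul_sum_abs_sum_mul_sub_le [Fintype ι] (hT1 : ∀ i, ∑ j, T i j = 1)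
    (hγ : ∀ i k, γ ≤ ∑ j, min (T i j) (T k j)) (p q : ι → ℝ)
    (hp : ∀ i, 0 ≤ p i) (hq : ∀ i, 0 ≤ q i) (hpq : ∑ i, p i = ∑ i, q i) :
    (∑ i, p i) * ∑ j, |∑ i, T i j * (p i - q i)| ≤ 2 * (1 - γ) * (∑ i, p i) ^ 2 := by
  set D := ∑ i, p i
  have hD : 0 ≤ D := sum_nonneg fun i _ => hp i
  have hcoupling : ∀ j, D * ∑ i, T i j * (p i - q i) =
      ∑ i, ∑ k, p i * q k * (T i j - T k j) := by
    intro j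
    calc D * ∑ i, T i j * (p i - q i)
        = (∑ i, T i j * p i) * ∑ k, q k - (∑ i, p i) * ∑ k, T k j * q k := by
          rw [← hpq]
          simp only [mul_sub, sum_sub_distrib]
          ring
      _ = ∑ i, ∑ k, p i * q k * (T i j - T k j) := by
          simp only [sum_mul_sum, ← sum_sub_distrib]
          exact sum_congr rfl fun i _ => sum_congr rfl fun k _ => by ring
  calc D * ∑ j, |∑ i, T i j * (p i - q i)|
      = ∑ j, |∑ i, ∑ k, p i * q k * (T i j - T k j)| := by
        rw [mul_sum]
        refine sum_congr rfl fun j _ => ?_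
        rw [← hcoupling, abs_mul, abs_of_nonneg hD]
    _ ≤ ∑ j, ∑ i, ∑ k, p i * q k * |T i j - T k j| := by
        refine sum_le_sum fun j _ => (abs_sum_le_sum_abs _ _).trans (sum_le_sum fun i _ => ?_)
        refine (abs_sum_le_sum_abs _ _).trans_eq (sum_congr rfl fun k _ => ?_)
        rw [abs_mul, abs_of_nonneg (mul_nonneg (hp i) (hq k))]
    _ = ∑ i, ∑ k, p i * q k * ∑ j, |T i j - T k j| := by
        simp only [mul_sum]
        rw [sum_comm]
        exact sum_congr rfl fun i _ => sum_comm
    _ ≤ ∑ i, ∑ k, p i * q k * (2 * (1 - γ)) := by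
        gcongr with i _ k _
        · exact mul_nonneg (hp i) (hq k)
        · exact sum_abs_sub_rows_le T hT1 hγ i k
    _ = 2 * (1 - γ) * D ^ 2 := by
        simp only [← sum_mul, ← mul_sum, ← hpq]
        ring

theorem sum_abs_sum_mul_le_of_sum_eq_zero [Fintype ι] (hT1 : ∀ i, ∑ j, T i j = 1)
    (hγ : ∀ i k, γ ≤ ∑ j, min (T i j) (T k j)) (μ : ι → ℝ) (hμ : ∑ i, μ i = 0) :
    ∑ j, |∑ i, T i j * μ i| ≤ (1 - γ) * ∑ i, |μ i| := by
  set D := ∑ i, (μ i)⁺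
  have hneg : ∑ i, (μ i)⁻ = D := by
    have hsplit : ∑ i, μ i = D - ∑ i, (μ i)⁻ := by
      rw [← sum_sub_distrib]
      simp only [posPart_sub_negPart]
    linarith
  have hnorm : ∑ i, |μ i| = 2 * D := by
    simp only [← posPart_add_negPart, sum_add_distrib, hneg]
    ring
  have key : D * ∑ j, |∑ i, T i j * μ i| ≤ 2 * (1 - γ) * D ^ 2 := by
    simpa only [posPart_sub_negPart] using sum_mul_sum_abs_sum_mul_sub_le T hT1 hγ
      (fun i => (μ i)⁺) (fun i => (μ i)⁻) (fun i => posPart_nonneg _) (fun i => negPart_nonneg _)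
      hneg.symm
  rcases (show 0 ≤ D from sum_nonneg fun i _ => posPart_nonneg (μ i)).eq_or_lt with hD | hD
  · have hμ0 : ∀ i, μ i = 0 := by
      have habs := (sum_eq_zero_iff_of_nonneg fun i _ => abs_nonneg (μ i)).1
        (by rw [hnorm, ← hD, mul_zero])
      exact fun i => abs_eq_zero.1 (habs i (mem_univ i))
    simp [hμ0]
  · rw [hnorm]
    refine le_of_mul_le_mul_left ?_ hD
    linarith

end MixingRate

theorem tv_dist_contraction_mixing_rate_general
    {X : Type*} [Fintype X] [Nonempty X]
    (T : X → X → ℝ) (hT1 : ∀ i, ∑ j, T i j = 1)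
    (γ : ℝ)
    (hγ : γ = Finset.univ.inf' Finset.univ_nonempty
      (fun q : X × X => ∑ j, min (T q.1 j) (T q.2 j)))
    (φ ψ : X → ℝ)
    (hφ1 : ∑ x, φ x = 1)
    (hψ1 : ∑ x, ψ x = 1) :
    (1 / 2) * ∑ j, |(∑ i, T i j * φ i) - (∑ i, T i j * ψ i)| ≤
      (1 - γ) * ((1 / 2) * ∑ x, |φ x - ψ x|) := by
  have hγ_le : ∀ i k, γ ≤ ∑ j, min (T i j) (T k j) := fun i k =>
    hγ ▸ inf'_le _ (mem_univ (i, k))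
  have hmass : ∑ x, (φ x - ψ x) = 0 := by rw [sum_sub_distrib, hφ1, hψ1, sub_self]
  have hcontract := sum_abs_sum_mul_le_of_sum_eq_zero T hT1 hγ_le _ hmass
  simp only [mul_sub, sum_sub_distrib] at hcontract
  linarith

/-- Let `T` be a row-stochastic transition matrix on a finite nonempty set `X`
with minimal mixing rate `γ = min_{i₁,i₂} ∑_j min{T(j|i₁), T(j|i₂)}`. Then for any two
probability distributions `φ` and `ψ` on `X`,
`δ(T·φ, T·ψ) ≤ (1 − γ)·δ(φ, ψ)`, where `(T·φ)(j) = ∑_i T(j|i)·φ(i)`. -/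
theorem tv_dist_contraction_mixing_rate
    {X : Type*} [Fintype X] [Nonempty X]
    (T : X → X → ℝ) (hT0 : ∀ i j, 0 ≤ T i j) (hT1 : ∀ i, ∑ j, T i j = 1)
    (γ : ℝ)
    (hγ : γ = Finset.univ.inf' Finset.univ_nonempty
      (fun q : X × X => ∑ j, min (T q.1 j) (T q.2 j)))
    (φ ψ : X → ℝ)
    (hφ0 : ∀ x, 0 ≤ φ x) (hφ1 : ∑ x, φ x = 1)
    (hψ0 : ∀ x, 0 ≤ ψ x) (hψ1 : ∑ x, ψ x = 1) :
    (1 / 2) * ∑ j, |(∑ i, T i j * φ i) - (∑ i, T i j * ψ i)| ≤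
      (1 - γ) * ((1 / 2) * ∑ x, |φ x - ψ x|) :=
  tv_dist_contraction_mixing_rate_general T hT1 γ hγ φ ψ hφ1 hψ1
end

section
/- Let X be a finite nonempty set and T a row-stochastic transition matrix on X with minimal mixing rate γ := min_{i₁,i₂} ∑_j min{T(j | i₁), T(j | i₂)}. Then for any two probability distributions φ and ψ on X there exist nonnegative matrices T^Γ and T^Δ on X such that T = T^Γ + T^Δ entrywise, for every i the row sum ∑_j T^Γ(j | i) = γ, and for every j, ∑_i φ(i)·T^Γ(j | i) = ∑_i ψ(i)·T^Γ(j | i). -/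
/-!
Put `d = φ - ψ`. For states `i, k`, the kernel `γ · min (T i ·) (T k ·) / ∑ⱼ min (T i j) (T k j)`
has mass `γ`, lies below row `i` of `T` (as `γ` is at most the overlap of the two rows) and is
symmetric in `i, k`. Take `T^Γ i` to be a mixture `∑ₖ w i k · (kernel of i, k)` whose weights
make `d i · w i k` antisymmetric (rows with `d i ≥ 0` are coupled to `d⁻`, the others to `d⁺`).
Then `∑ᵢ d i · T^Γ i j` pairs an antisymmetric array with a symmetric one, so it vanishes.
-/

open Finset

section Antisymmetric

variable {ι : Type*} [Fintype ι]

theorem sum_sum_mul_eq_zero_of_antisymm_of_symm {R : Type*} [CommRing R] [NoZeroDivisors R]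
    [CharZero R] {A B : ι → ι → R} (hA : ∀ i k, A i k = -A k i) (hB : ∀ i k, B i k = B k i) :
    ∑ i, ∑ k, A i k * B i k = 0 := by
  refine CharZero.eq_neg_self_iff.mp ?_
  conv_lhs => rw [sum_comm]
  simp only [← sum_neg_distrib]
  exact sum_congr rfl fun i _ => sum_congr rfl fun k _ => by rw [hA, hB]; ring

theorem exists_rowStochastic_mul_antisymm (d : ι → ℝ) (hd : ∑ i, d i = 0) :
    ∃ w : ι → ι → ℝ, (∀ i k, 0 ≤ w i k) ∧ (∀ i, ∑ k, w i k = 1) ∧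
      ∀ i k, d i * w i k = -(d k * w k i) := by
  classical
  set a := ∑ i, (d i)⁺
  have hneg : ∑ i, (d i)⁻ = a := by
    have h : ∑ i, ((d i)⁺ - (d i)⁻) = 0 := by simpa only [posPart_sub_negPart] using hd
    rw [sum_sub_distrib] at h
    linarith
  by_cases ha : a = 0
  · have hpos0 : ∀ i, (d i)⁺ = 0 := fun i =>
      (sum_eq_zero_iff_of_nonneg fun i _ => posPart_nonneg _).mp ha i (mem_univ i)
    have hneg0 : ∀ i, (d i)⁻ = 0 := fun i =>
      (sum_eq_zero_iff_of_nonneg fun i _ => negPart_nonneg _).mp (hneg.trans ha) i (mem_univ i)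
    have hd0 : ∀ i, d i = 0 := fun i => by
      rw [← posPart_sub_negPart (d i), hpos0, hneg0, sub_zero]
    refine ⟨fun i k => if i = k then 1 else 0, fun i k => ?_, fun i => by simp, fun i k => ?_⟩
    · dsimp only
      split_ifs <;> norm_num
    · simp [hd0]
  refine ⟨fun i k => if 0 ≤ d i then (d k)⁻ / a else (d k)⁺ / a, fun i k => ?_, fun i => ?_,
    fun i k => ?_⟩
  · dsimp only
    split_ifs <;> positivity
  · dsimp only
    split_ifs <;> rw [← sum_div, div_eq_one_iff_eq ha]
    exact hneg
  · have key : ∀ i k, d i * (if 0 ≤ d i then (d k)⁻ / a else (d k)⁺ / a) =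
        ((d i)⁺ * (d k)⁻ - (d i)⁻ * (d k)⁺) / a := by
      intro i k
      split_ifs with h
      · rw [negPart_eq_zero.2 h, posPart_eq_self.2 h]; ring
      · push Not at h
        rw [posPart_eq_zero.2 h.le, negPart_eq_neg.2 h.le]; ring
    rw [key, key]; ring

end Antisymmetric

section OverlapKernel

variable {X : Type*} [Fintype X] (T : X → X → ℝ) (γ : ℝ)

noncomputable def rowOverlap (i k : X) : ℝ := ∑ j, min (T i j) (T k j)

-- For disjoint rows `γ / 0 = 0` makes the kernel vanish, which is right since then `γ = 0`.
noncomputable def overlapKernel (i k j : X) : ℝ := γ / rowOverlap T i k * min (T i j) (T k j)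

variable {T γ}

theorem rowOverlap_comm (i k : X) : rowOverlap T i k = rowOverlap T k i := by
  simp only [rowOverlap, min_comm]

theorem overlapKernel_comm (i k j : X) : overlapKernel T γ i k j = overlapKernel T γ k i j := by
  rw [overlapKernel, overlapKernel, rowOverlap_comm, min_comm]

theorem overlapKernel_nonneg (hT0 : ∀ i j, 0 ≤ T i j) (hγ0 : 0 ≤ γ) (i k j : X) :
    0 ≤ overlapKernel T γ i k j :=
  mul_nonneg (div_nonneg hγ0 (sum_nonneg fun j _ => le_min (hT0 i j) (hT0 k j)))
    (le_min (hT0 i j) (hT0 k j))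

theorem overlapKernel_le (hT0 : ∀ i j, 0 ≤ T i j) (hγ0 : 0 ≤ γ) {i k : X}
    (hγ : γ ≤ rowOverlap T i k) (j : X) : overlapKernel T γ i k j ≤ T i j :=
  calc overlapKernel T γ i k j ≤ 1 * min (T i j) (T k j) :=
        mul_le_mul_of_nonneg_right (div_le_one_of_le₀ hγ (hγ0.trans hγ))
          (le_min (hT0 i j) (hT0 k j))
    _ ≤ T i j := by rw [one_mul]; exact min_le_left _ _

theorem sum_overlapKernel (hγ0 : 0 ≤ γ) {i k : X} (hγ : γ ≤ rowOverlap T i k) :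
    ∑ j, overlapKernel T γ i k j = γ := by
  simp only [overlapKernel, ← mul_sum]
  exact div_mul_cancel_of_imp fun h => le_antisymm (h ▸ hγ) hγ0

end OverlapKernel

theorem contraction_decomposition_exists_general
    {X : Type*} [Fintype X] [Nonempty X]
    (T : X → X → ℝ) (hT0 : ∀ i j, 0 ≤ T i j)
    (γ : ℝ)
    (hγ : γ = Finset.univ.inf' Finset.univ_nonempty
      (fun q : X × X => ∑ j, min (T q.1 j) (T q.2 j)))
    (φ ψ : X → ℝ)
    (hφ1 : ∑ x, φ x = 1)
    (hψ1 : ∑ x, ψ x = 1) :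
    ∃ TΓ TΔ : X → X → ℝ,
      (∀ i j, 0 ≤ TΓ i j) ∧ (∀ i j, 0 ≤ TΔ i j) ∧
      (∀ i j, T i j = TΓ i j + TΔ i j) ∧
      (∀ i, ∑ j, TΓ i j = γ) ∧
      (∀ j, ∑ i, φ i * TΓ i j = ∑ i, ψ i * TΓ i j) := by
  have hγ0 : 0 ≤ γ :=
    hγ ▸ le_inf' _ _ fun q _ => sum_nonneg fun j _ => le_min (hT0 q.1 j) (hT0 q.2 j)
  have hγle : ∀ i k, γ ≤ rowOverlap T i k := fun i k => hγ ▸ inf'_le _ (mem_univ (i, k))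
  obtain ⟨w, hw0, hw1, hw⟩ :=
    exists_rowStochastic_mul_antisymm (φ - ψ) (by simp [sum_sub_distrib, hφ1, hψ1])
  set TΓ : X → X → ℝ := fun i j => ∑ k, w i k * overlapKernel T γ i k j with hTΓ
  have hTΓle : ∀ i j, TΓ i j ≤ T i j := fun i j =>
    calc TΓ i j ≤ ∑ k, w i k * T i j := sum_le_sum fun k _ =>
          mul_le_mul_of_nonneg_left (overlapKernel_le hT0 hγ0 (hγle i k) j) (hw0 i k)
      _ = T i j := by rw [← sum_mul, hw1, one_mul]
  refine ⟨TΓ, fun i j => T i j - TΓ i j,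
    fun i j => sum_nonneg fun k _ => mul_nonneg (hw0 i k) (overlapKernel_nonneg hT0 hγ0 i k j),
    fun i j => sub_nonneg.mpr (hTΓle i j), fun i j => by ring, fun i => ?_, fun j => ?_⟩
  · calc ∑ j, TΓ i j = ∑ k, w i k * ∑ j, overlapKernel T γ i k j := by
          simp only [hTΓ, mul_sum]; exact sum_comm
      _ = γ := by simp only [sum_overlapKernel hγ0 (hγle i _), ← sum_mul, hw1, one_mul]
  · rw [← sub_eq_zero, ← sum_sub_distrib]
    calc ∑ i, (φ i * TΓ i j - ψ i * TΓ i j)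
        = ∑ i, ∑ k, (φ - ψ) i * w i k * overlapKernel T γ i k j := by
          simp only [hTΓ, Pi.sub_apply, sub_mul, mul_sum, mul_assoc, sum_sub_distrib]
      _ = 0 := sum_sum_mul_eq_zero_of_antisymm_of_symm hw fun i k => overlapKernel_comm i k j

/-- Let `T` be a row-stochastic transition matrix on a finite nonempty set `X`
with minimal mixing rate `γ = min_{i₁,i₂} ∑_j min{T(j|i₁), T(j|i₂)}`. Then for any two
probability distributions `φ` and `ψ` on `X`, there exist nonnegative matrices `T^Γ` and `T^Δ`
with `T = T^Γ + T^Δ` entrywise, every row of `T^Γ` summing to `γ`, and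
`∑_i φ(i)·T^Γ(j|i) = ∑_i ψ(i)·T^Γ(j|i)` for every `j`. -/
theorem contraction_decomposition_exists
    {X : Type*} [Fintype X] [Nonempty X]
    (T : X → X → ℝ) (hT0 : ∀ i j, 0 ≤ T i j) (hT1 : ∀ i, ∑ j, T i j = 1)
    (γ : ℝ)
    (hγ : γ = Finset.univ.inf' Finset.univ_nonempty
      (fun q : X × X => ∑ j, min (T q.1 j) (T q.2 j)))
    (φ ψ : X → ℝ)
    (hφ0 : ∀ x, 0 ≤ φ x) (hφ1 : ∑ x, φ x = 1)
    (hψ0 : ∀ x, 0 ≤ ψ x) (hψ1 : ∑ x, ψ x = 1) :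
    ∃ TΓ TΔ : X → X → ℝ,
      (∀ i j, 0 ≤ TΓ i j) ∧ (∀ i j, 0 ≤ TΔ i j) ∧
      (∀ i j, T i j = TΓ i j + TΔ i j) ∧
      (∀ i, ∑ j, TΓ i j = γ) ∧
      (∀ j, ∑ i, φ i * TΓ i j = ∑ i, ψ i * TΓ i j) :=
  contraction_decomposition_exists_general T hT0 γ hγ φ ψ hφ1 hψ1
end

section
/- Let X be a finite nonempty set, T a row-stochastic transition matrix on X with minimal mixing rate γ := min_{i₁,i₂} ∑_j min{T(j | i₁), T(j | i₂)}, and assume γ > 0. Let p ∈ (0,1]. Let (P^k)_{k≥0} be probability distributions with P^k = T·P^{k−1} for k ≥ 1, and let (Q^k)_{k≥0} be probability distributions with δ(Q^0, P^0) ≤ 1 − p and δ(Q^k, T·Q^{k−1}) ≤ 1 − p for k ≥ 1. Then for every time step k ≥ 0, δ(P^k, Q^k) ≤ (1 − p)/γ. -/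
open Finset

lemma tv_contract {X : Type*} [Fintype X]
    (T : X → X → ℝ) (hT0 : ∀ i j, 0 ≤ T i j) (hT1 : ∀ i, ∑ j, T i j = 1)
    (γ : ℝ) (hγle : ∀ i i', γ ≤ ∑ j, min (T i j) (T i' j))
    (d : X → ℝ) (hd : ∑ i, d i = 0) :
    ∑ j, |∑ i, T i j * d i| ≤ (1 - γ) * ∑ i, |d i| := by
  set a : X → ℝ := fun i => max (d i) 0 with ha
  set b : X → ℝ := fun i => max (-d i) 0 with hb
  have hab : ∀ i, d i = a i - b i := by
    intro i; simp only [ha, hb, max_def]; split_ifs <;> simp_all <;> linarith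
  have habs : ∀ i, |d i| = a i + b i := fun i =>
    (max_zero_add_max_neg_zero_eq_abs_self (d i)).symm
  have ha0 : ∀ i, 0 ≤ a i := fun i => le_max_right _ _
  have hb0 : ∀ i, 0 ≤ b i := fun i => le_max_right _ _
  have hsab : ∑ i, a i = ∑ i, b i := by
    have h0 : ∑ i, (a i - b i) = 0 :=
      (Finset.sum_congr rfl (fun i _ => (hab i).symm)).trans hd
    rw [Finset.sum_sub_distrib] at h0; linarith
  set s : ℝ := ∑ i, a i with hs
  have hs0 : 0 ≤ s := Finset.sum_nonneg (fun i _ => ha0 i)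
  have hS : ∑ i, |d i| = 2 * s := by
    rw [Finset.sum_congr rfl (fun i _ => habs i), Finset.sum_add_distrib, ← hsab]; ring
  rcases eq_or_lt_of_le hs0 with hsz | hsp
  · have hz : ∀ i, d i = 0 := by
      intro i
      have h2 : ∑ i, |d i| = 0 := by rw [hS, ← hsz]; ring
      have := (Finset.sum_eq_zero_iff_of_nonneg (fun i _ => abs_nonneg (d i))).mp h2 i (Finset.mem_univ i)
      exact abs_eq_zero.mp this
    simp [hz]
  · have key : ∀ j, s * (∑ i, T i j * d i) = ∑ i, ∑ i', a i * b i' * (T i j - T i' j) := by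
      intro j
      have e1 : ∑ i, ∑ i', a i * b i' * (T i j - T i' j)
          = (∑ i, T i j * a i) * (∑ i', b i') - (∑ i, a i) * (∑ i', T i' j * b i') := by
        rw [Finset.sum_mul_sum, Finset.sum_mul_sum, ← Finset.sum_sub_distrib]
        apply Finset.sum_congr rfl; intro i _
        rw [← Finset.sum_sub_distrib]
        apply Finset.sum_congr rfl; intro i' _; ring
      have e2 : ∑ i, T i j * d i = (∑ i, T i j * a i) - (∑ i, T i j * b i) := by
        rw [← Finset.sum_sub_distrib]
        apply Finset.sum_congr rfl; intro i _; rw [hab i]; ring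
      rw [e1, ← hsab, ← hs, e2]
      have e3 : ∑ i', T i' j * b i' = ∑ i, T i j * b i := rfl
      rw [e3]; ring
    have hrow : ∀ i i', ∑ j, |T i j - T i' j| ≤ 2 - 2 * γ := by
      intro i i'
      have e : ∀ j, |T i j - T i' j| = T i j + T i' j - 2 * min (T i j) (T i' j) := by
        intro j; rcases le_total (T i j) (T i' j) with h | h
        · rw [abs_of_nonpos (by linarith), min_eq_left h]; ring
        · rw [abs_of_nonneg (by linarith), min_eq_right h]; ring
      rw [Finset.sum_congr rfl (fun j _ => e j)]
      have h1 : ∑ j, (T i j + T i' j - 2 * min (T i j) (T i' j))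
          = (∑ j, T i j) + (∑ j, T i' j) - 2 * ∑ j, min (T i j) (T i' j) := by
        rw [Finset.mul_sum, ← Finset.sum_add_distrib, ← Finset.sum_sub_distrib]
      rw [h1, hT1, hT1]
      linarith [hγle i i']
    have step : ∀ j, s * |∑ i, T i j * d i| ≤ ∑ i, ∑ i', a i * b i' * |T i j - T i' j| := by
      intro j
      have h1 : s * |∑ i, T i j * d i| = |∑ i, ∑ i', a i * b i' * (T i j - T i' j)| := by
        rw [← key j, abs_mul, abs_of_nonneg hs0]
      rw [h1]
      calc |∑ i, ∑ i', a i * b i' * (T i j - T i' j)|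
          ≤ ∑ i, |∑ i', a i * b i' * (T i j - T i' j)| := Finset.abs_sum_le_sum_abs _ _
        _ ≤ ∑ i, ∑ i', |a i * b i' * (T i j - T i' j)| :=
            Finset.sum_le_sum (fun i _ => Finset.abs_sum_le_sum_abs _ _)
        _ = ∑ i, ∑ i', a i * b i' * |T i j - T i' j| := by
            apply Finset.sum_congr rfl; intro i _
            apply Finset.sum_congr rfl; intro i' _
            rw [abs_mul, abs_mul, abs_of_nonneg (ha0 i), abs_of_nonneg (hb0 i')]
    have hsum : s * ∑ j, |∑ i, T i j * d i| ≤ s * s * (2 - 2 * γ) := by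
      rw [Finset.mul_sum]
      calc ∑ j, s * |∑ i, T i j * d i|
          ≤ ∑ j, ∑ i, ∑ i', a i * b i' * |T i j - T i' j| :=
            Finset.sum_le_sum (fun j _ => step j)
        _ = ∑ i, ∑ i', a i * b i' * ∑ j, |T i j - T i' j| := by
            rw [Finset.sum_comm]
            apply Finset.sum_congr rfl; intro i _
            rw [Finset.sum_comm]
            apply Finset.sum_congr rfl; intro i' _
            rw [Finset.mul_sum]
        _ ≤ ∑ i, ∑ i', a i * b i' * (2 - 2 * γ) := by
            apply Finset.sum_le_sum; intro i _
            apply Finset.sum_le_sum; intro i' _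
            exact mul_le_mul_of_nonneg_left (hrow i i') (mul_nonneg (ha0 i) (hb0 i'))
        _ = s * s * (2 - 2 * γ) := by
            have e : ∑ i, ∑ i', a i * b i' * (2 - 2 * γ)
                = ((∑ i, a i) * (∑ i', b i')) * (2 - 2 * γ) := by
              rw [Finset.sum_mul_sum, Finset.sum_mul]
              apply Finset.sum_congr rfl; intro i _
              rw [Finset.sum_mul]
            rw [e, ← hsab, ← hs]
    have hfin : ∑ j, |∑ i, T i j * d i| ≤ s * (2 - 2 * γ) := by
      have h2 : s * (∑ j, |∑ i, T i j * d i|) ≤ s * (s * (2 - 2 * γ)) := by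
        nlinarith [hsum]
      exact le_of_mul_le_mul_left h2 hsp
    rw [hS]; nlinarith [hfin]

/-- Let `T` be a row-stochastic transition matrix on a finite nonempty set `X`
with minimal mixing rate `γ > 0`, and `p ∈ (0,1]`. Let `(P^k)` be probability distributions
with `P^{k+1} = T·P^k`, and `(Q^k)` probability distributions with `δ(Q^0, P^0) ≤ 1 − p` and
`δ(Q^{k+1}, T·Q^k) ≤ 1 − p`. Then for every time step `k`, `δ(P^k, Q^k) ≤ (1 − p)/γ`. -/
theorem tv_dist_top_p_uniform_bound
    {X : Type*} [Fintype X] [Nonempty X]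
    (T : X → X → ℝ) (hT0 : ∀ i j, 0 ≤ T i j) (hT1 : ∀ i, ∑ j, T i j = 1)
    (γ : ℝ)
    (hγ : γ = Finset.univ.inf' Finset.univ_nonempty
      (fun q : X × X => ∑ j, min (T q.1 j) (T q.2 j)))
    (hγpos : 0 < γ)
    (p : ℝ) (hp0 : 0 < p) (hp1 : p ≤ 1)
    (P Q : ℕ → X → ℝ)
    (hPpos : ∀ k x, 0 ≤ P k x) (hPsum : ∀ k, ∑ x, P k x = 1)
    (hQpos : ∀ k x, 0 ≤ Q k x) (hQsum : ∀ k, ∑ x, Q k x = 1)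
    (hPstep : ∀ k j, P (k + 1) j = ∑ i, T i j * P k i)
    (hQ0 : (1 / 2) * ∑ x, |Q 0 x - P 0 x| ≤ 1 - p)
    (hQstep : ∀ k, (1 / 2) * ∑ x, |Q (k + 1) x - ∑ i, T i x * Q k i| ≤ 1 - p) :
    ∀ k : ℕ, (1 / 2) * ∑ x, |P k x - Q k x| ≤ (1 - p) / γ := by
  have hγle : ∀ i i', γ ≤ ∑ j, min (T i j) (T i' j) := by
    intro i i'; rw [hγ]
    exact Finset.inf'_le _ (Finset.mem_univ ((i, i') : X × X))
  have hγ1 : γ ≤ 1 := by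
    obtain ⟨i⟩ := ‹Nonempty X›
    have := hγle i i
    simpa [hT1 i] using this
  intro k
  induction k with
  | zero =>
      have h1 : (∑ x, |P 0 x - Q 0 x|) = ∑ x, |Q 0 x - P 0 x| :=
        Finset.sum_congr rfl (fun x _ => abs_sub_comm _ _)
      have hle : (1 / 2 : ℝ) * ∑ x, |P 0 x - Q 0 x| ≤ 1 - p := by rw [h1]; exact hQ0
      have h2 : (1 - p) ≤ (1 - p) / γ := by
        rw [le_div_iff₀ hγpos]; nlinarith
      linarith
  | succ k ih =>
      have hd : ∑ i, (P k i - Q k i) = 0 := by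
        rw [Finset.sum_sub_distrib, hPsum k, hQsum k]; ring
      have hc := tv_contract T hT0 hT1 γ hγle (fun i => P k i - Q k i) hd
      have hpt : ∀ x, |P (k+1) x - Q (k+1) x|
          ≤ |∑ i, T i x * (P k i - Q k i)| + |Q (k+1) x - ∑ i, T i x * Q k i| := by
        intro x
        have e : P (k+1) x - Q (k+1) x
            = (∑ i, T i x * (P k i - Q k i)) - (Q (k+1) x - ∑ i, T i x * Q k i) := by
          rw [hPstep k x]
          have e2 : ∑ i, T i x * (P k i - Q k i)
              = ∑ i, T i x * P k i - ∑ i, T i x * Q k i := by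
            rw [← Finset.sum_sub_distrib]
            apply Finset.sum_congr rfl; intro i _; ring
          rw [e2]; ring
        rw [e]; exact abs_sub _ _
      have hsum : ∑ x, |P (k+1) x - Q (k+1) x|
          ≤ (1 - γ) * (∑ i, |P k i - Q k i|) + ∑ x, |Q (k+1) x - ∑ i, T i x * Q k i| := by
        calc ∑ x, |P (k+1) x - Q (k+1) x|
            ≤ ∑ x, (|∑ i, T i x * (P k i - Q k i)| + |Q (k+1) x - ∑ i, T i x * Q k i|) :=
              Finset.sum_le_sum (fun x _ => hpt x)
          _ = (∑ x, |∑ i, T i x * (P k i - Q k i)|)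
              + ∑ x, |Q (k+1) x - ∑ i, T i x * Q k i| := Finset.sum_add_distrib
          _ ≤ _ := by linarith [hc]
      have hQs := hQstep k
      have heq : (1 - γ) * ((1 - p) / γ) + (1 - p) = (1 - p) / γ := by
        field_simp; ring
      have h2 : (1 - γ) * (∑ i, |P k i - Q k i|) ≤ (1 - γ) * (2 * ((1 - p) / γ)) := by
        apply mul_le_mul_of_nonneg_left _ (by linarith)
        linarith [ih]
      linarith [hsum, hQs, h2, heq]
end

section
/- Let X be a finite nonempty set, T a row-stochastic transition matrix on X with minimal mixing rate γ := min_{i₁,i₂} ∑_j min{T(j | i₁), T(j | i₂)}, and k ≥ 0 a natural number. Then for any two probability distributions φ and ψ on X, δ(T^k·φ, T^k·ψ) ≤ (1 − γ)^k · δ(φ, ψ), where T^k denotes k-fold application of the transition; i.e., an error introduced at one time step diminishes by a factor of 1 − γ in each subsequent time step. -/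
def transStep {X : Type*} [Fintype X] (T : X → X → ℝ) (φ : X → ℝ) : X → ℝ :=
  fun j => ∑ i, T i j * φ i

section aux
variable {X : Type*} [Fintype X] [Nonempty X]

lemma transStep_sum (T : X → X → ℝ) (hT1 : ∀ i, ∑ j, T i j = 1) (φ : X → ℝ) :
    ∑ j, transStep T φ j = ∑ i, φ i := by
  unfold transStep
  rw [Finset.sum_comm]
  simp [← Finset.sum_mul, hT1]

lemma contract (T : X → X → ℝ) (hT0 : ∀ i j, 0 ≤ T i j) (hT1 : ∀ i, ∑ j, T i j = 1)
    (γ : ℝ) (hγ : γ = Finset.univ.inf' Finset.univ_nonempty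
      (fun q : X × X => ∑ j, min (T q.1 j) (T q.2 j)))
    (φ ψ : X → ℝ) (hsum : ∑ i, φ i = ∑ i, ψ i) :
    ∑ j, |transStep T φ j - transStep T ψ j| ≤ (1 - γ) * ∑ i, |φ i - ψ i| := by
  set d : X → ℝ := fun i => φ i - ψ i with hd
  set p : X → ℝ := fun i => max (d i) 0 with hp
  set q : X → ℝ := fun i => max (-(d i)) 0 with hq
  have hp0 : ∀ i, 0 ≤ p i := fun i => le_max_right _ _
  have hq0 : ∀ i, 0 ≤ q i := fun i => le_max_right _ _
  have hpq : ∀ i, d i = p i - q i := by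
    intro i
    rcases le_total (d i) 0 with h | h
    · simp [hp, hq, max_eq_right h, max_eq_left (neg_nonneg.mpr h)]
    · simp [hp, hq, max_eq_left h, max_eq_right (neg_nonpos.mpr h)]
  have habs : ∀ i, |d i| = p i + q i := by
    intro i
    rcases le_total (d i) 0 with h | h
    · rw [abs_of_nonpos h]
      simp [hp, hq, max_eq_right h, max_eq_left (neg_nonneg.mpr h)]
    · rw [abs_of_nonneg h]
      simp [hp, hq, max_eq_left h, max_eq_right (neg_nonpos.mpr h)]
  have hdsum : ∑ i, d i = 0 := by
    simp only [hd, Finset.sum_sub_distrib, hsum, sub_self]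
  set s : ℝ := ∑ i, p i with hs
  have hqs : ∑ i, q i = s := by
    have : ∑ i, (p i - q i) = 0 := by
      rw [← hdsum]; exact Finset.sum_congr rfl fun i _ => (hpq i).symm
    rw [Finset.sum_sub_distrib] at this
    linarith
  have habssum : ∑ i, |d i| = 2 * s := by
    rw [Finset.sum_congr rfl fun i _ => habs i, Finset.sum_add_distrib, hqs]; ring
  have hstep : ∀ j, transStep T φ j - transStep T ψ j = ∑ i, T i j * d i := by
    intro j
    unfold transStep
    rw [← Finset.sum_sub_distrib]
    exact Finset.sum_congr rfl fun i _ => by simp [hd]; ring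
  have hs0 : 0 ≤ s := Finset.sum_nonneg fun i _ => hp0 i
  rcases eq_or_lt_of_le hs0 with hse | hsl
  · -- s = 0 : all d vanish
    have hdz : ∀ i, d i = 0 := by
      intro i
      have h1 : p i = 0 :=
        le_antisymm (by
          have := Finset.single_le_sum (fun i _ => hp0 i) (Finset.mem_univ i)
          linarith [this]) (hp0 i)
      have h2 : q i = 0 :=
        le_antisymm (by
          have := Finset.single_le_sum (fun i _ => hq0 i) (Finset.mem_univ i)
          rw [hqs] at this
          linarith [this]) (hq0 i)
      rw [hpq i, h1, h2, sub_zero]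
    have : ∀ j, transStep T φ j - transStep T ψ j = 0 := by
      intro j; rw [hstep j]
      exact Finset.sum_eq_zero fun i _ => by rw [hdz i, mul_zero]
    simp [this, habssum, ← hse]
    simp [show ∀ i, φ i - ψ i = 0 from fun i => hdz i]
  · -- s > 0
    have hsne : s ≠ 0 := ne_of_gt hsl
    -- key identity
    have hid : ∀ j, ∑ i, ∑ i', p i * q i' * (T i j - T i' j) = s * ∑ i, T i j * d i := by
      intro j
      have e1 : ∑ i, ∑ i', p i * q i' * T i j = (∑ i, p i * T i j) * s := by
        rw [show s = ∑ i', q i' from hqs.symm, Finset.sum_mul_sum]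
        exact Finset.sum_congr rfl fun i _ => Finset.sum_congr rfl fun i' _ => by ring
      have e2 : ∑ i, ∑ i', p i * q i' * T i' j = s * (∑ i', q i' * T i' j) := by
        rw [hs, Finset.sum_mul_sum]
        exact Finset.sum_congr rfl fun i _ => Finset.sum_congr rfl fun i' _ => by ring
      calc ∑ i, ∑ i', p i * q i' * (T i j - T i' j)
          = ∑ i, ∑ i', (p i * q i' * T i j - p i * q i' * T i' j) := by
            exact Finset.sum_congr rfl fun i _ => Finset.sum_congr rfl fun i' _ => by ring
        _ = (∑ i, ∑ i', p i * q i' * T i j) - ∑ i, ∑ i', p i * q i' * T i' j := by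
            simp [Finset.sum_sub_distrib]
        _ = (∑ i, p i * T i j) * s - s * (∑ i', q i' * T i' j) := by rw [e1, e2]
        _ = s * ∑ i, T i j * d i := by
            have h : ∑ i, T i j * d i = (∑ i, p i * T i j) - (∑ i', q i' * T i' j) := by
              rw [← Finset.sum_sub_distrib]
              exact Finset.sum_congr rfl fun i _ => by rw [hpq i]; ring
            rw [h]; ring
    -- total variation of rows
    have hTV : ∀ i i', ∑ j, |T i j - T i' j| ≤ 2 - 2 * γ := by
      intro i i'
      have hmin : γ ≤ ∑ j, min (T i j) (T i' j) := by
        rw [hγ]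
        exact Finset.inf'_le _ (Finset.mem_univ (i, i'))
      have : ∀ j, |T i j - T i' j| = T i j + T i' j - 2 * min (T i j) (T i' j) := by
        intro j
        rcases le_total (T i j) (T i' j) with h | h
        · rw [abs_of_nonpos (sub_nonpos.mpr h), min_eq_left h]; ring
        · rw [abs_of_nonneg (sub_nonneg.mpr h), min_eq_right h]; ring
      rw [Finset.sum_congr rfl fun j _ => this j]
      simp only [Finset.sum_sub_distrib, Finset.sum_add_distrib, hT1, ← Finset.mul_sum]
      linarith
    -- per-j bound
    have hj : ∀ j, |transStep T φ j - transStep T ψ j|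
        ≤ s⁻¹ * ∑ i, ∑ i', p i * q i' * |T i j - T i' j| := by
      intro j
      rw [hstep j]
      have : ∑ i, T i j * d i = s⁻¹ * ∑ i, ∑ i', p i * q i' * (T i j - T i' j) := by
        rw [hid j]; field_simp
      rw [this, abs_mul, abs_of_nonneg (inv_nonneg.mpr hs0)]
      apply mul_le_mul_of_nonneg_left _ (inv_nonneg.mpr hs0)
      calc |∑ i, ∑ i', p i * q i' * (T i j - T i' j)|
          ≤ ∑ i, |∑ i', p i * q i' * (T i j - T i' j)| := Finset.abs_sum_le_sum_abs _ _
        _ ≤ ∑ i, ∑ i', |p i * q i' * (T i j - T i' j)| :=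
            Finset.sum_le_sum fun i _ => Finset.abs_sum_le_sum_abs _ _
        _ = ∑ i, ∑ i', p i * q i' * |T i j - T i' j| := by
            exact Finset.sum_congr rfl fun i _ => Finset.sum_congr rfl fun i' _ => by
              rw [abs_mul, abs_mul, abs_of_nonneg (hp0 i), abs_of_nonneg (hq0 i')]
    calc ∑ j, |transStep T φ j - transStep T ψ j|
        ≤ ∑ j, s⁻¹ * ∑ i, ∑ i', p i * q i' * |T i j - T i' j| :=
          Finset.sum_le_sum fun j _ => hj j
      _ = s⁻¹ * ∑ i, ∑ i', p i * q i' * ∑ j, |T i j - T i' j| := by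
          rw [← Finset.mul_sum]
          congr 1
          rw [Finset.sum_comm]
          refine Finset.sum_congr rfl fun i _ => ?_
          rw [Finset.sum_comm]
          refine Finset.sum_congr rfl fun i' _ => ?_
          rw [Finset.mul_sum]
      _ ≤ s⁻¹ * ∑ i, ∑ i', p i * q i' * (2 - 2 * γ) := by
          apply mul_le_mul_of_nonneg_left _ (inv_nonneg.mpr hs0)
          refine Finset.sum_le_sum fun i _ => Finset.sum_le_sum fun i' _ => ?_
          exact mul_le_mul_of_nonneg_left (hTV i i') (mul_nonneg (hp0 i) (hq0 i'))
      _ = s⁻¹ * ((2 - 2 * γ) * s * s) := by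
          congr 1
          have h : ∑ i, ∑ i', p i * q i' * (2 - 2 * γ)
              = (∑ i, p i) * (∑ i', q i' * (2 - 2 * γ)) := by
            rw [Finset.sum_mul_sum]
            exact Finset.sum_congr rfl fun i _ => Finset.sum_congr rfl fun i' _ => by ring
          rw [h, ← Finset.sum_mul, hqs, ← hs]; ring
      _ = (1 - γ) * (2 * s) := by field_simp
      _ = (1 - γ) * ∑ i, |d i| := by rw [habssum]

end aux

/-- Let `T` be a row-stochastic transition matrix on a finite nonempty set
`X` with minimal mixing rate `γ`, and `k ≥ 0`. Then for any two probability distributions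
`φ` and `ψ` on `X`, `δ(T^k·φ, T^k·ψ) ≤ (1 − γ)^k · δ(φ, ψ)`: an error introduced at one time
step diminishes by a factor of `1 − γ` in each subsequent time step. -/
theorem tv_dist_iterated_contraction
    {X : Type*} [Fintype X] [Nonempty X]
    (T : X → X → ℝ) (hT0 : ∀ i j, 0 ≤ T i j) (hT1 : ∀ i, ∑ j, T i j = 1)
    (γ : ℝ)
    (hγ : γ = Finset.univ.inf' Finset.univ_nonempty
      (fun q : X × X => ∑ j, min (T q.1 j) (T q.2 j)))
    (k : ℕ)
    (φ ψ : X → ℝ)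
    (hφ0 : ∀ x, 0 ≤ φ x) (hφ1 : ∑ x, φ x = 1)
    (hψ0 : ∀ x, 0 ≤ ψ x) (hψ1 : ∑ x, ψ x = 1) :
    (1 / 2) * ∑ x, |(transStep T)^[k] φ x - (transStep T)^[k] ψ x| ≤
      (1 - γ) ^ k * ((1 / 2) * ∑ x, |φ x - ψ x|) := by
  have hγ1 : γ ≤ 1 := by
    obtain ⟨x⟩ := ‹Nonempty X›
    rw [hγ]
    refine le_trans (Finset.inf'_le _ (Finset.mem_univ (x, x))) ?_
    simp [hT1 x]
  have key : ∀ (n : ℕ) (f g : X → ℝ), (∑ i, f i = ∑ i, g i) →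
      ∑ x, |(transStep T)^[n] f x - (transStep T)^[n] g x|
        ≤ (1 - γ) ^ n * ∑ x, |f x - g x| := by
    intro n
    induction n with
    | zero => intro f g _; simp
    | succ m ih =>
      intro f g hfg
      rw [Function.iterate_succ_apply, Function.iterate_succ_apply]
      calc ∑ x, |(transStep T)^[m] (transStep T f) x - (transStep T)^[m] (transStep T g) x|
          ≤ (1 - γ) ^ m * ∑ x, |transStep T f x - transStep T g x| := by
            exact ih _ _ (by rw [transStep_sum T hT1, transStep_sum T hT1, hfg])
        _ ≤ (1 - γ) ^ m * ((1 - γ) * ∑ x, |f x - g x|) := by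
            exact mul_le_mul_of_nonneg_left (contract T hT0 hT1 γ hγ f g hfg)
              (pow_nonneg (by linarith) m)
        _ = (1 - γ) ^ (m + 1) * ∑ x, |f x - g x| := by ring
  have h := key k φ ψ (by rw [hφ1, hψ1])
  rw [show (1 - γ) ^ k * ((1/2) * ∑ x, |φ x - ψ x|)
    = (1/2) * ((1 - γ) ^ k * ∑ x, |φ x - ψ x|) by ring]
  linarith
end

section
/- Let X be a finite nonempty set, P a probability distribution on X, p ∈ (0,1], and Y a top-p set of P (so P(Y) ≥ p and every element of Y has P-probability at least that of every element outside Y). Among all subsets Z ⊆ X with |Z| ≤ |Y|, the set Y maximizes P(Z); consequently, the top-p distribution Q of P (defined by Q(x) = P(x)/P(Y) for x ∈ Y and 0 otherwise) achieves total variation distance δ(P,Q) = 1 − P(Y) ≤ 1 − P(Z) for every Z with |Z| ≤ |Y| and its renormalized restriction. -/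
/-!
A set of at most `|Y|` elements can only trade elements of `Y` for elements outside `Y`, and it
has no more of the latter than of the former; since every element outside `Y` weighs at most the
lightest element of `Y` it gives up, `Y` carries maximal mass. The renormalized restriction of `P`
to any `W` moves exactly the mass `1 - P(W)`, so its total variation distance from `P` is
`1 - P(W)`, which is therefore minimized by `W = Y`.
-/

open Finset

namespace Finset

theorem sum_le_sum_of_card_le_of_forall_notMem_le {ι M : Type*} [DecidableEq ι]
    [AddCommMonoid M] [LinearOrder M] [IsOrderedCancelAddMonoid M] {f : ι → M} {s t : Finset ι}
    (hf : ∀ i ∈ t, 0 ≤ f i) (hcard : #s ≤ #t) (htop : ∀ i ∈ t, ∀ j ∉ t, f j ≤ f i) :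
    ∑ i ∈ s, f i ≤ ∑ i ∈ t, f i := by
  rw [← sum_sdiff_le_sum_sdiff]
  have hcard' : #(s \ t) ≤ #(t \ s) := card_sdiff_le_card_sdiff_iff.2 hcard
  rcases (t \ s).eq_empty_or_nonempty with hts | hts
  · have hst : s \ t = ∅ := card_eq_zero.1 (by simpa [hts] using hcard')
    simp [hts, hst]
  · obtain ⟨m, hm, hmin⟩ := exists_min_image (t \ s) f hts
    have hmt : m ∈ t := (mem_sdiff.1 hm).1
    calc ∑ i ∈ s \ t, f i ≤ #(s \ t) • f m :=
          sum_le_card_nsmul _ _ _ fun j hj ↦ htop m hmt j (mem_sdiff.1 hj).2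
      _ ≤ #(t \ s) • f m := nsmul_le_nsmul_left (hf m hmt) hcard'
      _ ≤ ∑ i ∈ t \ s, f i := card_nsmul_le_sum _ _ _ hmin

end Finset

section RestrictRenorm

variable {X : Type*} [Fintype X] [DecidableEq X]

noncomputable def restrictRenorm (P : X → ℝ) (W : Finset X) (x : X) : ℝ :=
  if x ∈ W then P x / ∑ z ∈ W, P z else 0

theorem half_sum_abs_sub_restrictRenorm {P : X → ℝ} (hP0 : ∀ x, 0 ≤ P x)
    (hP1 : ∑ x, P x = 1) {W : Finset X} (hW : 0 < ∑ x ∈ W, P x) :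
    (1 / 2) * ∑ x, |P x - restrictRenorm P W x| = 1 - ∑ x ∈ W, P x := by
  set s := ∑ x ∈ W, P x
  have hs1 : s ≤ 1 := hP1 ▸ sum_le_univ_sum_of_nonneg hP0
  have hin : ∀ x ∈ W, |P x - restrictRenorm P W x| = P x / s - P x := by
    intro x hx
    rw [restrictRenorm, if_pos hx, abs_sub_comm, abs_of_nonneg (sub_nonneg.2 _)]
    exact le_div_self (hP0 x) hW hs1
  have hout : ∀ x ∈ Wᶜ, |P x - restrictRenorm P W x| = P x := by
    intro x hx
    rw [restrictRenorm, if_neg (mem_compl.1 hx), sub_zero, abs_of_nonneg (hP0 x)]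
  have hcompl : s + ∑ x ∈ Wᶜ, P x = 1 := hP1 ▸ sum_add_sum_compl W P
  rw [← sum_add_sum_compl W, sum_congr rfl hin, sum_congr rfl hout, sum_sub_distrib, ← sum_div,
    div_self hW.ne']
  linarith

end RestrictRenorm

theorem top_p_set_optimal_general
    {X : Type*} [Fintype X] [DecidableEq X]
    (P : X → ℝ) (hP0 : ∀ x, 0 ≤ P x) (hP1 : ∑ x, P x = 1)
    (p : ℝ) (hp0 : 0 < p)
    (Y : Finset X) (hYp : p ≤ ∑ x ∈ Y, P x)
    (hYtop : ∀ x ∈ Y, ∀ x' ∉ Y, P x' ≤ P x)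
    (Q : X → ℝ)
    (hQ : ∀ x, Q x = if x ∈ Y then P x / (∑ y ∈ Y, P y) else 0) :
    (∀ Z : Finset X, Z.card ≤ Y.card → ∑ x ∈ Z, P x ≤ ∑ x ∈ Y, P x) ∧
    ((1 / 2) * ∑ x, |P x - Q x| = 1 - ∑ x ∈ Y, P x) ∧
    (∀ Z : Finset X, Z.card ≤ Y.card →
      (1 / 2) * ∑ x, |P x - Q x| ≤ 1 - ∑ x ∈ Z, P x) ∧
    (∀ Z : Finset X, Z.card ≤ Y.card → 0 < ∑ x ∈ Z, P x →
      (1 / 2) * ∑ x, |P x - Q x| ≤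
        (1 / 2) * ∑ x, |P x - (if x ∈ Z then P x / (∑ z ∈ Z, P z) else 0)|) := by
  have hYmax : ∀ Z : Finset X, Z.card ≤ Y.card → ∑ x ∈ Z, P x ≤ ∑ x ∈ Y, P x :=
    fun Z hZ ↦ sum_le_sum_of_card_le_of_forall_notMem_le (fun x _ ↦ hP0 x) hZ hYtop
  have hQY : Q = restrictRenorm P Y := funext hQ
  have hδY : (1 / 2) * ∑ x, |P x - Q x| = 1 - ∑ x ∈ Y, P x :=
    hQY ▸ half_sum_abs_sub_restrictRenorm hP0 hP1 (hp0.trans_le hYp)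
  refine ⟨hYmax, hδY, fun Z hZ ↦ ?_, fun Z hZ hZ0 ↦ ?_⟩
  · linarith [hYmax Z hZ]
  · have hδZ := half_sum_abs_sub_restrictRenorm hP0 hP1 hZ0
    simp only [restrictRenorm] at hδZ
    linarith [hYmax Z hZ]

/-- Let `P` be a probability distribution on a finite nonempty set `X`,
`p ∈ (0,1]`, and `Y` a top-`p` set of `P` (so `P(Y) ≥ p` and every element of `Y` has
`P`-probability at least that of every element outside `Y`). Then among all subsets `Z` with
`|Z| ≤ |Y|`, the set `Y` maximizes `P(Z)`; consequently, the top-`p` distribution `Q` of `P`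
(`Q(x) = P(x)/P(Y)` for `x ∈ Y`, else `0`) achieves total variation distance
`δ(P,Q) = 1 − P(Y) ≤ 1 − P(Z)` for every `Z` with `|Z| ≤ |Y|`, and
`δ(P,Q) ≤ δ(P, R_Z)` for the renormalized restriction `R_Z` of `P` to any such `Z` with
`P(Z) > 0`. -/
theorem top_p_set_optimal
    {X : Type*} [Fintype X] [Nonempty X] [DecidableEq X]
    (P : X → ℝ) (hP0 : ∀ x, 0 ≤ P x) (hP1 : ∑ x, P x = 1)
    (p : ℝ) (hp0 : 0 < p) (hp1 : p ≤ 1)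
    (Y : Finset X) (hYp : p ≤ ∑ x ∈ Y, P x)
    (hYtop : ∀ x ∈ Y, ∀ x' ∉ Y, P x' ≤ P x)
    (Q : X → ℝ)
    (hQ : ∀ x, Q x = if x ∈ Y then P x / (∑ y ∈ Y, P y) else 0) :
    (∀ Z : Finset X, Z.card ≤ Y.card → ∑ x ∈ Z, P x ≤ ∑ x ∈ Y, P x) ∧
    ((1 / 2) * ∑ x, |P x - Q x| = 1 - ∑ x ∈ Y, P x) ∧
    (∀ Z : Finset X, Z.card ≤ Y.card →
      (1 / 2) * ∑ x, |P x - Q x| ≤ 1 - ∑ x ∈ Z, P x) ∧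
    (∀ Z : Finset X, Z.card ≤ Y.card → 0 < ∑ x ∈ Z, P x →
      (1 / 2) * ∑ x, |P x - Q x| ≤
        (1 / 2) * ∑ x, |P x - (if x ∈ Z then P x / (∑ z ∈ Z, P z) else 0)|) :=
  top_p_set_optimal_general P hP0 hP1 p hp0 Y hYp hYtop Q hQ
end
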